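/- In a Shapley-Scarf market with preferences from an objective indifferences domain R(𝓗), every TTC_≻ mechanism is group strategy-proof within the domain: for every R ∈ R(𝓗)^n, there is no coalition Q ⊆ N and misreport R' = (R'_Q, R_{−Q}) ∈ R(𝓗)^n such that TTC_≻(R')_i R_i TTC_≻(R)_i for all i ∈ Q with strict preference for at least one member of Q. -/
import Mathlib


open scoped Classical

namespace ShapleyScarf

/-- A weak preference relation: complete (total) and transitive, hence reflexive. -/
structure WeakOrder (H : Type*) where
  rel : H → H → Prop
  total : ∀ a b, rel a b ∨ rel b a
  trans : ∀ a b c, rel a b → rel b c → rel a c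

namespace WeakOrder
variable {H : Type*}
/-- Strict part `P` of a weak preference. -/
def P (R : WeakOrder H) (a b : H) : Prop := R.rel a b ∧ ¬ R.rel b a
/-- Indifference part `I` of a weak preference. -/
def I (R : WeakOrder H) (a b : H) : Prop := R.rel a b ∧ R.rel b a
end WeakOrder

/-- `lt` is a strict linear order on agents (a tie-breaking order). -/
def IsTieBreak {n : ℕ} (lt : Fin n → Fin n → Prop) : Prop :=
  (∀ a b, a ≠ b → lt a b ∨ lt b a) ∧ Transitive lt ∧ ∀ a, ¬ lt a a

section Defs
variable {n : ℕ} {H : Type*} {B : Type*}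

/-- Strict part of the tie-broken preference `P_{i,≻}`: `a` above `b` iff
`a P b`, or `a I b` and the owner of `a` comes before the owner of `b` in `≻_i`. -/
def tieBroken (w : Fin n ≃ H) (R : WeakOrder H) (lt : Fin n → Fin n → Prop) (a b : H) : Prop :=
  R.P a b ∨ (R.I a b ∧ lt (w.symm a) (w.symm b))

/-- The weak tie-broken relation `R_{i,≻}` (reflexive closure of the strict part). -/
def tieBrokenWeak (w : Fin n ≃ H) (R : WeakOrder H) (lt : Fin n → Fin n → Prop)
    (a b : H) : Prop :=
  a = b ∨ tieBroken w R lt a b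

/-- The owner (in `S`) of the `pref`-best house among the endowments of the
remaining agents `S`; the agent with this endowment is whom `i` points at. -/
noncomputable def point (w : Fin n ≃ H) (pref : H → H → Prop) (S : Finset (Fin n))
    (i : Fin n) : Fin n :=
  if h : (S.filter fun m => ∀ j ∈ S, j = m ∨ pref (w m) (w j)).Nonempty then
    (S.filter fun m => ∀ j ∈ S, j = m ∨ pref (w m) (w j)).min' h
  else i

/-- The agents of `S` lying on some trading cycle of the pointing map. -/
noncomputable def cycleAgents (w : Fin n ≃ H) (pref : Fin n → H → H → Prop)
    (S : Finset (Fin n)) : Finset (Fin n) :=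
  S.filter fun i => ∃ k, 0 < k ∧ (fun j => point w (pref j) S j)^[k] i = i

/-- Top trading cycles on strict preferences, fuel-based recursion: in each round all
current trading cycles are executed and their agents removed. -/
noncomputable def TTCaux (w : Fin n ≃ H) (pref : Fin n → H → H → Prop) :
    ℕ → Finset (Fin n) → Fin n → H
  | 0, _, i => w i
  | fuel + 1, S, i =>
      if i ∈ cycleAgents w pref S then w (point w (pref i) S i)
      else TTCaux w pref fuel (S \ cycleAgents w pref S) i

/-- Gale's top trading cycles algorithm for a strict preference profile. -/
noncomputable def TTCstrict (w : Fin n ≃ H) (pref : Fin n → H → H → Prop) : Fin n → H :=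
  TTCaux w pref n Finset.univ

/-- Round (executed-cycle index, starting from 1) at which an agent is assigned. -/
noncomputable def TTCroundAux (w : Fin n ≃ H) (pref : Fin n → H → H → Prop) :
    ℕ → Finset (Fin n) → Fin n → ℕ
  | 0, _, _ => 1
  | fuel + 1, S, i =>
      if i ∈ cycleAgents w pref S then 1
      else TTCroundAux w pref fuel (S \ cycleAgents w pref S) i + 1

/-- TTC with fixed tie-breaking: `TTC_≻(R) = TTC(R_≻)`. -/
noncomputable def TTCtb (w : Fin n ≃ H) (R : Fin n → WeakOrder H)
    (tb : Fin n → Fin n → Fin n → Prop) : Fin n → H :=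
  TTCstrict w fun i => tieBroken w (R i) (tb i)

/-- The round in which agent `i` is assigned under `TTC_≻(R)`. -/
noncomputable def TTCtbRound (w : Fin n ≃ H) (R : Fin n → WeakOrder H)
    (tb : Fin n → Fin n → Fin n → Prop) (i : Fin n) : ℕ :=
  TTCroundAux w (fun a => tieBroken w (R a) (tb a)) n Finset.univ i

/-- Objective indifferences w.r.t. the partition of `H` into the fibers of `blk`:
indifference holds exactly between houses in the same block. -/
def ObjInd (blk : H → B) (R : WeakOrder H) : Prop :=
  ∀ a b, R.I a b ↔ blk a = blk b

/-- `x` is blocked: some coalition `Q` can reallocate its own endowments making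
all its members weakly better off and one strictly better off. -/
def Blocks (w : Fin n ≃ H) (R : Fin n → WeakOrder H) (x : Fin n → H) : Prop :=
  ∃ (Q : Finset (Fin n)) (y : Fin n ≃ H),
    Q.image (⇑y) = Q.image (⇑w) ∧
    (∀ i ∈ Q, (R i).rel (y i) (x i)) ∧
    ∃ i ∈ Q, (R i).P (y i) (x i)

/-- `x` is weakly blocked: some nonempty coalition can reallocate its own
endowments making all of its members strictly better off. -/
def WeaklyBlocks (w : Fin n ≃ H) (R : Fin n → WeakOrder H) (x : Fin n → H) : Prop :=
  ∃ Q : Finset (Fin n), Q.Nonempty ∧ ∃ y : Fin n ≃ H,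
    Q.image (⇑y) = Q.image (⇑w) ∧ ∀ i ∈ Q, (R i).P (y i) (x i)

/-- `y` Pareto dominates `x`. -/
def ParetoDom (R : Fin n → WeakOrder H) (y x : Fin n → H) : Prop :=
  (∀ i, (R i).rel (y i) (x i)) ∧ ∃ i, (R i).P (y i) (x i)

end Defs

/-! ### helpers -/

section Helpers
variable {n : ℕ} {H : Type*}

/-- A strict total order. -/
def STO (p : H → H → Prop) : Prop :=
  (∀ a b, a ≠ b → p a b ∨ p b a) ∧ Transitive p ∧ ∀ a, ¬ p a a

lemma STO.asymm {p : H → H → Prop} (h : STO p) {a b : H} (hab : p a b) : ¬ p b a :=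
  fun hba => h.2.2 a (h.2.1 hab hba)

lemma WeakOrder.rel_refl (R : WeakOrder H) (a : H) : R.rel a a :=
  (R.total a a).elim id id

lemma tieBroken_STO (w : Fin n ≃ H) (R : WeakOrder H) {lt : Fin n → Fin n → Prop}
    (hlt : IsTieBreak lt) : STO (tieBroken w R lt) := by
  refine ⟨?_, ?_, ?_⟩
  · intro a b hab
    by_cases h1 : R.rel a b <;> by_cases h2 : R.rel b a
    · rcases hlt.1 (w.symm a) (w.symm b) (fun h => hab (by simpa using congrArg w h)) with h | h
      · exact Or.inl (Or.inr ⟨⟨h1, h2⟩, h⟩)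
      · exact Or.inr (Or.inr ⟨⟨h2, h1⟩, h⟩)
    · exact Or.inl (Or.inl ⟨h1, h2⟩)
    · exact Or.inr (Or.inl ⟨h2, h1⟩)
    · rcases R.total a b with h | h
      · exact absurd h h1
      · exact absurd h h2
  · rintro a b c (hab | ⟨hab, hab'⟩) (hbc | ⟨hbc, hbc'⟩)
    · exact Or.inl ⟨R.trans _ _ _ hab.1 hbc.1, fun h => hbc.2 (R.trans _ _ _ h hab.1)⟩
    · exact Or.inl ⟨R.trans _ _ _ hab.1 hbc.1, fun h => hab.2 (R.trans _ _ _ hbc.1 h)⟩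
    · exact Or.inl ⟨R.trans _ _ _ hab.1 hbc.1, fun h => hbc.2 (R.trans _ _ _ h hab.1)⟩
    · exact Or.inr ⟨⟨R.trans _ _ _ hab.1 hbc.1, R.trans _ _ _ hbc.2 hab.2⟩, hlt.2.1 hab' hbc'⟩
  · rintro a (h | h)
    · exact h.2 (R.rel_refl a)
    · exact hlt.2.2 _ h.2

variable (w : Fin n ≃ H)

lemma exists_max {p : H → H → Prop} (hp : STO p) :
    ∀ S : Finset (Fin n), S.Nonempty → ∃ m ∈ S, ∀ j ∈ S, j = m ∨ p (w m) (w j) := by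
  intro S
  induction S using Finset.induction_on with
  | empty => intro h; exact absurd h (by simp)
  | @insert a T ha ih =>
    intro _
    rcases T.eq_empty_or_nonempty with rfl | hT
    · exact ⟨a, by simp, by simp⟩
    · obtain ⟨m, hm, hmax⟩ := ih hT
      have ham : a ≠ m := fun h => ha (h ▸ hm)
      rcases hp.1 (w a) (w m) (fun h => ham (w.injective h)) with h | h
      · refine ⟨a, Finset.mem_insert_self _ _, ?_⟩
        intro j hj
        rcases Finset.mem_insert.mp hj with rfl | hjT
        · exact Or.inl rfl
        · rcases hmax j hjT with rfl | hmj
          · exact Or.inr h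
          · exact Or.inr (hp.2.1 h hmj)
      · refine ⟨m, Finset.mem_insert_of_mem hm, ?_⟩
        intro j hj
        rcases Finset.mem_insert.mp hj with rfl | hjT
        · exact Or.inr h
        · exact hmax j hjT

lemma point_spec {p : H → H → Prop} (hp : STO p) (S : Finset (Fin n)) (hS : S.Nonempty)
    (i : Fin n) :
    point w p S i ∈ S ∧ ∀ j ∈ S, j = point w p S i ∨ p (w (point w p S i)) (w j) := by
  obtain ⟨m, hm, hmax⟩ := exists_max w hp S hS
  have hne : (S.filter fun m => ∀ j ∈ S, j = m ∨ p (w m) (w j)).Nonempty :=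
    ⟨m, Finset.mem_filter.mpr ⟨hm, hmax⟩⟩
  rw [point, dif_pos hne]
  have h := Finset.min'_mem _ hne
  exact ⟨(Finset.mem_filter.mp h).1, (Finset.mem_filter.mp h).2⟩

variable (pref : Fin n → H → H → Prop)

lemma cyc_subset (S : Finset (Fin n)) : cycleAgents w pref S ⊆ S := Finset.filter_subset _ _

lemma mem_cyc {S : Finset (Fin n)} {i : Fin n} :
    i ∈ cycleAgents w pref S ↔
      i ∈ S ∧ ∃ k, 0 < k ∧ (fun j => point w (pref j) S j)^[k] i = i :=
  Finset.mem_filter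

variable (hpref : ∀ i, STO (pref i))
include hpref

lemma fpt_mem_cyc {S : Finset (Fin n)} {i : Fin n} (hi : i ∈ cycleAgents w pref S) :
    point w (pref i) S i ∈ cycleAgents w pref S := by
  obtain ⟨hiS, k, hk, hfix⟩ := (mem_cyc w pref).mp hi
  have hfS : point w (pref i) S i ∈ S := (point_spec w (hpref i) S ⟨i, hiS⟩ i).1
  refine (mem_cyc w pref).mpr ⟨hfS, k, hk, ?_⟩
  show (fun j => point w (pref j) S j)^[k] ((fun j => point w (pref j) S j) i) = _
  rw [← Function.iterate_succ_apply, Function.iterate_succ_apply', hfix]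

lemma fpt_injOn {S : Finset (Fin n)} {i j : Fin n} (hi : i ∈ cycleAgents w pref S)
    (hj : j ∈ cycleAgents w pref S)
    (hij : point w (pref i) S i = point w (pref j) S j) : i = j := by
  set f := fun j => point w (pref j) S j with hf
  obtain ⟨-, k, hk, hfixi⟩ := (mem_cyc w pref).mp hi
  obtain ⟨-, l, hl, hfixj⟩ := (mem_cyc w pref).mp hj
  have hki : f^[k * l] i = i := by
    rw [Function.iterate_mul]; exact Function.iterate_fixed hfixi l
  have hlj : f^[k * l] j = j := by
    rw [mul_comm, Function.iterate_mul]; exact Function.iterate_fixed hfixj k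
  have hm : 0 < k * l := Nat.mul_pos hk hl
  have : f^[k * l] i = f^[k * l] j := by
    rw [show k * l = (k * l - 1) + 1 from by omega,
      Function.iterate_succ_apply, Function.iterate_succ_apply]
    show f^[k * l - 1] (f i) = f^[k * l - 1] (f j)
    rw [show f i = f j from hij]
  rw [hki, hlj] at this; exact this

lemma fpt_image {S : Finset (Fin n)} :
    (cycleAgents w pref S).image (fun j => point w (pref j) S j) = cycleAgents w pref S := by
  apply Finset.eq_of_subset_of_card_le
  · intro x hx
    obtain ⟨j, hj, rfl⟩ := Finset.mem_image.mp hx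
    exact fpt_mem_cyc w pref hpref hj
  · rw [Finset.card_image_of_injOn (fun i hi j hj hij => fpt_injOn w pref hpref hi hj hij)]

lemma cyc_nonempty {S : Finset (Fin n)} (hS : S.Nonempty) :
    (cycleAgents w pref S).Nonempty := by
  obtain ⟨i, hi⟩ := hS
  set f := fun j => point w (pref j) S j with hf
  have hit : ∀ k, f^[k] i ∈ S := by
    intro k
    induction k with
    | zero => exact hi
    | succ k ih =>
      rw [Function.iterate_succ_apply']
      exact (point_spec w (hpref _) S ⟨i, hi⟩ _).1
  have key : ∀ a b : ℕ, a < b → f^[a] i = f^[b] i → (cycleAgents w pref S).Nonempty := by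
    intro a b hab heq
    refine ⟨f^[a] i, (mem_cyc w pref).mpr ⟨hit a, b - a, by omega, ?_⟩⟩
    rw [← Function.iterate_add_apply, show b - a + a = b from by omega, ← heq]
  have : ∃ a ∈ Finset.range (S.card + 1), ∃ b ∈ Finset.range (S.card + 1),
      a ≠ b ∧ f^[a] i = f^[b] i := by
    apply Finset.exists_ne_map_eq_of_card_lt_of_maps_to (t := S)
    · simp
    · intro a _; exact hit a
  obtain ⟨a, -, b, -, hab, heq⟩ := this
  rcases lt_or_gt_of_ne hab with h | h
  · exact key a b h heq
  · exact key b a h heq.symm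

lemma run_exists : ∀ (fuel : ℕ) (S : Finset (Fin n)) (i : Fin n), i ∈ S → S.card ≤ fuel →
    ∃ r, i ∈ cycleAgents w pref ((fun T => T \ cycleAgents w pref T)^[r] S) ∧
      TTCaux w pref fuel S i =
        w (point w (pref i) ((fun T => T \ cycleAgents w pref T)^[r] S) i) := by
  intro fuel
  induction fuel with
  | zero =>
    intro S i hi hc
    rw [Finset.card_eq_zero.mp (Nat.le_zero.mp hc)] at hi
    exact absurd hi (by simp)
  | succ fuel ih =>
    intro S i hi hc
    by_cases hC : i ∈ cycleAgents w pref S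
    · exact ⟨0, hC, by simp [TTCaux, hC]⟩
    · have hlt : (S \ cycleAgents w pref S).card ≤ fuel := by
        have h1 : (S \ cycleAgents w pref S).card < S.card :=
          Finset.card_lt_card (Finset.sdiff_ssubset (cyc_subset w pref S)
            (cyc_nonempty w pref hpref ⟨i, hi⟩))
        omega
      obtain ⟨r, h1, h2⟩ := ih _ i (Finset.mem_sdiff.mpr ⟨hi, hC⟩) hlt
      refine ⟨r + 1, ?_, ?_⟩
      · rw [Function.iterate_succ_apply]; exact h1
      · rw [Function.iterate_succ_apply]
        rw [show TTCaux w pref (fuel + 1) S i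
              = TTCaux w pref fuel (S \ cycleAgents w pref S) i from by simp [TTCaux, hC]]
        exact h2

omit hpref in
lemma ttcRem_succ (r : ℕ) :
    ((fun T => T \ cycleAgents w pref T)^[r + 1]) Finset.univ
      = ((fun T => T \ cycleAgents w pref T)^[r]) Finset.univ
        \ cycleAgents w pref (((fun T => T \ cycleAgents w pref T)^[r]) Finset.univ) := by
  rw [Function.iterate_succ_apply']

omit hpref in
lemma ttcRem_anti {a b : ℕ} (hab : a ≤ b) :
    ((fun T => T \ cycleAgents w pref T)^[b]) Finset.univ
      ⊆ ((fun T => T \ cycleAgents w pref T)^[a]) Finset.univ := by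
  induction b, hab using Nat.le_induction with
  | base => exact subset_rfl
  | succ b hab ih =>
    rw [ttcRem_succ]
    exact (Finset.sdiff_subset).trans ih

lemma rounds_exist (i : Fin n) :
    ∃ r, i ∈ cycleAgents w pref (((fun T => T \ cycleAgents w pref T)^[r]) Finset.univ) ∧
      TTCstrict w pref i
        = w (point w (pref i) (((fun T => T \ cycleAgents w pref T)^[r]) Finset.univ) i) :=
  run_exists w pref hpref n Finset.univ i (Finset.mem_univ i) (by simp)

omit hpref in
lemma round_unique {i : Fin n} {a b : ℕ}
    (ha : i ∈ cycleAgents w pref (((fun T => T \ cycleAgents w pref T)^[a]) Finset.univ))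
    (hb : i ∈ cycleAgents w pref (((fun T => T \ cycleAgents w pref T)^[b]) Finset.univ)) :
    a = b := by
  have key : ∀ a b : ℕ, a < b →
      i ∈ cycleAgents w pref (((fun T => T \ cycleAgents w pref T)^[a]) Finset.univ) →
      i ∈ cycleAgents w pref (((fun T => T \ cycleAgents w pref T)^[b]) Finset.univ) → False := by
    intro a b hab ha hb
    have h1 := ttcRem_anti w pref (show a + 1 ≤ b from hab) (cyc_subset w pref _ hb)
    rw [ttcRem_succ] at h1
    exact (Finset.mem_sdiff.mp h1).2 ha
  rcases lt_trichotomy a b with h | h | h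
  · exact absurd hb (fun hb => key a b h ha hb)
  · exact h
  · exact absurd ha (fun ha => key b a h hb ha)

lemma TTCstrict_injective : Function.Injective (TTCstrict w pref) := by
  choose ρ hm hv using rounds_exist w pref hpref
  have aux : ∀ i j : Fin n, ρ i < ρ j → TTCstrict w pref i ≠ TTCstrict w pref j := by
    intro i j hlt heq
    have hpe : point w (pref i) (((fun T => T \ cycleAgents w pref T)^[ρ i]) Finset.univ) i
        = point w (pref j) (((fun T => T \ cycleAgents w pref T)^[ρ j]) Finset.univ) j :=
      w.injective (by rw [← hv i, ← hv j, heq])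
    have hpi := fpt_mem_cyc w pref hpref (hm i)
    have hpj := fpt_mem_cyc w pref hpref (hm j)
    have h1 := ttcRem_anti w pref (show ρ i + 1 ≤ ρ j from hlt) (cyc_subset w pref _ hpj)
    rw [ttcRem_succ] at h1
    exact (Finset.mem_sdiff.mp h1).2 (hpe ▸ hpi)
  intro i j heq
  rcases lt_trichotomy (ρ i) (ρ j) with h | h | h
  · exact absurd heq (aux i j h)
  · refine fpt_injOn w pref hpref (hm i) (h ▸ hm j) ?_
    have := w.injective (by rw [← hv i, ← hv j, heq] :
      w (point w (pref i) (((fun T => T \ cycleAgents w pref T)^[ρ i]) Finset.univ) i)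
        = w (point w (pref j) (((fun T => T \ cycleAgents w pref T)^[ρ j]) Finset.univ) j))
    rw [← h] at this
    exact this
  · exact absurd heq.symm (aux j i h)

end Helpers

section MainKey
variable {n : ℕ} {H : Type*}

/-- trajectory of remaining-agent sets of a TTC run -/
noncomputable def ttcTraj (w : Fin n ≃ H) (pref : Fin n → H → H → Prop) (r : ℕ) :
    Finset (Fin n) :=
  ((fun T => T \ cycleAgents w pref T)^[r]) Finset.univ

variable (w : Fin n ≃ H) (P P' : Fin n → H → H → Prop)

lemma main_key (hP : ∀ i, STO (P i)) (hP' : ∀ i, STO (P' i))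
    (hcross : ∀ i, P' i = P i ∨
      (P i (TTCstrict w P i) (TTCstrict w P' i) → P' i (TTCstrict w P i) (TTCstrict w P' i))) :
    ∀ i, TTCstrict w P' i = TTCstrict w P i := by
  have hre' : ∀ i, ∃ r, i ∈ cycleAgents w P' (ttcTraj w P' r) ∧
      TTCstrict w P' i = w (point w (P' i) (ttcTraj w P' r) i) := rounds_exist w P' hP'
  have hre : ∀ i, ∃ r, i ∈ cycleAgents w P (ttcTraj w P r) ∧
      TTCstrict w P i = w (point w (P i) (ttcTraj w P r) i) := rounds_exist w P hP
  choose ρ' hρ'm hρ'v using hre'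
  choose ρ hρm hρv using hre
  have hinj' := TTCstrict_injective w P' hP'
  set x := TTCstrict w P with hx
  set x' := TTCstrict w P' with hx'
  have ROUND : ∀ t : ℕ,
      (∀ i ∈ ttcTraj w P t, w.symm (x' i) ∈ ttcTraj w P t) →
      ∀ i ∈ cycleAgents w P (ttcTraj w P t),
        x' i = w (point w (P i) (ttcTraj w P t) i) := by
    intro t hInv
    suffices Ψ : ∀ r : ℕ, ∀ i ∈ cycleAgents w P (ttcTraj w P t), ρ' i = r →
        x' i = w (point w (P i) (ttcTraj w P t) i) ∧
        point w (P i) (ttcTraj w P t) i ∈ cycleAgents w P' (ttcTraj w P' r) by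
      exact fun i hi => (Ψ (ρ' i) i hi rfl).1
    intro r
    induction r using Nat.strong_induction_on with
    | _ r IH =>
    intro i hiC hρr
    set fT : Fin n → Fin n := fun j => point w (P j) (ttcTraj w P t) j with hfT
    have hiS : i ∈ ttcTraj w P t := cyc_subset w P _ hiC
    have hfTiC : fT i ∈ cycleAgents w P (ttcTraj w P t) := fpt_mem_cyc w P hP hiC
    -- Step 1 : r ≤ ρ' (fT i)
    have hge : r ≤ ρ' (fT i) := by
      by_contra hcon
      push_neg at hcon
      have hall : ∀ m : ℕ, fT^[m] (fT i) ∈ cycleAgents w P (ttcTraj w P t) ∧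
          ρ' (fT^[m] (fT i)) = ρ' (fT i) := by
        intro m
        induction m with
        | zero => exact ⟨hfTiC, rfl⟩
        | succ m ihm =>
          have h2 := IH (ρ' (fT i)) (by omega) (fT^[m] (fT i)) ihm.1 ihm.2
          rw [Function.iterate_succ_apply']
          exact ⟨fpt_mem_cyc w P hP ihm.1,
            (round_unique w P' h2.2 (hρ'm (fT (fT^[m] (fT i))))).symm⟩
      obtain ⟨-, k, hk, hfix⟩ := (mem_cyc w P).mp hiC
      have h3 : fT^[k - 1] (fT i) = i := by
        rw [← Function.iterate_succ_apply, show (k - 1).succ = k from by omega]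
        exact hfix
      have h4 := (hall (k - 1)).2
      rw [h3] at h4
      omega
    -- Step 2
    have hfiS' : fT i ∈ ttcTraj w P' r :=
      ttcRem_anti w P' hge (cyc_subset w P' _ (hρ'm (fT i)))
    have hiC' : i ∈ cycleAgents w P' (ttcTraj w P' r) := hρr ▸ hρ'm i
    have hiS' : i ∈ ttcTraj w P' r := cyc_subset w P' _ hiC'
    have hps := point_spec w (hP' i) _ ⟨i, hiS'⟩ i
    have hvx' : x' i = w (point w (P' i) (ttcTraj w P' r) i) := by rw [hρ'v i, hρr]
    have hts := point_spec w (hP i) _ ⟨i, hiS⟩ i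
    have hinvm := hInv i hiS
    rcases hts.2 _ hinvm with h | h
    · have he : x' i = w (fT i) := by
        rw [show fT i = w.symm (x' i) from h.symm]; simp
      refine ⟨he, ?_⟩
      have hp : point w (P' i) (ttcTraj w P' r) i = fT i := w.injective (by rw [← hvx', he])
      have hmem := fpt_mem_cyc w P' hP' hiC'
      rwa [hp] at hmem
    · exfalso
      rw [w.apply_symm_apply] at h
      have ht : ρ i = t := round_unique w P (hρm i) hiC
      have hxi : x i = w (fT i) := by rw [hρv i, ht]
      have hPx : P i (x i) (x' i) := by rw [hxi]; exact h
      have hP'x : P' i (x i) (x' i) := by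
        rcases hcross i with hq | hq
        · rw [hq]; exact hPx
        · exact hq hPx
      rcases hps.2 (fT i) hfiS' with heq | hlt
      · have hxx : x' i = x i := by rw [hvx', ← heq, hxi]
        rw [hxx] at hPx
        exact (hP i).2.2 _ hPx
      · have hlt2 : P' i (x' i) (x i) := by rw [hvx', hxi]; exact hlt
        exact (hP' i).asymm hP'x hlt2
  have INV : ∀ t : ℕ, ∀ i ∈ ttcTraj w P t, w.symm (x' i) ∈ ttcTraj w P t := by
    intro t
    induction t with
    | zero => intro i _; exact Finset.mem_univ _
    | succ t ih =>
      have hR := ROUND t ih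
      intro i hi
      rw [show ttcTraj w P (t + 1) = ttcTraj w P t \ cycleAgents w P (ttcTraj w P t) from
        ttcRem_succ w P t] at hi ⊢
      have hiS := (Finset.mem_sdiff.mp hi).1
      have hiC := (Finset.mem_sdiff.mp hi).2
      refine Finset.mem_sdiff.mpr ⟨ih i hiS, fun hC => ?_⟩
      have himg := fpt_image w P hP (S := ttcTraj w P t)
      rw [← himg] at hC
      obtain ⟨j', hj'C, hj'⟩ := Finset.mem_image.mp hC
      have hxeq : x' j' = x' i := by
        rw [hR j' hj'C, hj']; simp
      exact hiC ((hinj' hxeq) ▸ hj'C)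
  intro i
  have h1 := ROUND (ρ i) (INV (ρ i)) i (hρm i)
  rw [h1, ← hρv i]

end MainKey

/-- on an objective indifferences domain, every `TTC_≻` mechanism is
group strategy-proof within the domain. -/
theorem TTCtb_groupStrategyProof_objInd {n : ℕ} {H B : Type*} (w : Fin n ≃ H)
    (blk : H → B) (R : Fin n → WeakOrder H) (hR : ∀ i, ObjInd blk (R i))
    (tb : Fin n → Fin n → Fin n → Prop) (htb : ∀ i, IsTieBreak (tb i)) :
    ¬ ∃ (Q : Finset (Fin n)) (R' : Fin n → WeakOrder H),
      (∀ i, ObjInd blk (R' i)) ∧ (∀ i ∉ Q, R' i = R i) ∧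
      (∀ i ∈ Q, (R i).rel (TTCtb w R' tb i) (TTCtb w R tb i)) ∧
      ∃ i ∈ Q, (R i).P (TTCtb w R' tb i) (TTCtb w R tb i) := by
  rintro ⟨Q, R', hR', hRQ, hweak, i₀, hi₀Q, hstrict⟩
  have hP : ∀ i, STO (tieBroken w (R i) (tb i)) := fun i => tieBroken_STO w (R i) (htb i)
  have hP' : ∀ i, STO (tieBroken w (R' i) (tb i)) := fun i => tieBroken_STO w (R' i) (htb i)
  have hcross : ∀ i, (fun a => tieBroken w (R' a) (tb a)) i
        = (fun a => tieBroken w (R a) (tb a)) i ∨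
      (tieBroken w (R i) (tb i) (TTCstrict w (fun a => tieBroken w (R a) (tb a)) i)
          (TTCstrict w (fun a => tieBroken w (R' a) (tb a)) i) →
        tieBroken w (R' i) (tb i) (TTCstrict w (fun a => tieBroken w (R a) (tb a)) i)
          (TTCstrict w (fun a => tieBroken w (R' a) (tb a)) i)) := by
    intro i
    by_cases hiQ : i ∈ Q
    · right
      intro hPi
      rcases hPi with hp | ⟨hI, hlt⟩
      · exact absurd (hweak i hiQ) hp.2
      · exact Or.inr ⟨(hR' i _ _).mpr ((hR i _ _).mp hI), hlt⟩
    · show tieBroken w (R' i) (tb i) = tieBroken w (R i) (tb i) ∨ _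
      rw [hRQ i hiQ]
      exact Or.inl rfl
  have key := main_key w (fun a => tieBroken w (R a) (tb a))
    (fun a => tieBroken w (R' a) (tb a)) hP hP' hcross i₀
  have hstrict2 : (R i₀).P (TTCtb w R tb i₀) (TTCtb w R tb i₀) := by
    have : TTCtb w R' tb i₀ = TTCtb w R tb i₀ := key
    rwa [this] at hstrict
  exact hstrict2.2 hstrict2.1


end ShapleyScarf
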